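/- Let χ : A⊗B → B⊗A be a twisting map, with B finite-dimensional having basis {b_1,…,b_n} and structure constants λ^k_{ij}. Define φ_χ : B⊗_χ A → M_n(A) by sending 1⊗a to the matrix with (j,i)-entry γ_i^j(a), and b_k⊗1 to the matrix with (i,j)-entry λ^i_{kj}·1_A. Then φ_χ extends to a well-defined injective K-algebra homomorphism from B⊗_χ A to M_n(A), i.e., a faithful matrix representation of the twisted tensor product. -/

import Mathlib

/-!
Left multiplication by `x` on `B ⊗_χ A` is a map of right `A`-modules, and `B ⊗_χ A` is a free
right `A`-module with basis `b j ⊗ 1`; so each `x` has a matrix `Φ x ∈ Mₙ(A)`, and associativity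
of the twisted product (where the twisting axioms enter) makes `Φ` multiplicative. The columns of
`Φ x` are the coordinates of `x · (b j ⊗ 1)`, and `x = x · (1 ⊗ 1)` is a `K`-combination of these,
so `Φ` is faithful.
-/

open TensorProduct LinearMap

variable (K : Type*)

def IsTwistingMap {A B : Type*} [Field K] [Ring A] [Ring B] [Algebra K A] [Algebra K B]
    (χ : A ⊗[K] B →ₗ[K] B ⊗[K] A) : Prop :=
  (∀ b : B, χ ((1 : A) ⊗ₜ[K] b) = b ⊗ₜ[K] (1 : A)) ∧
  (∀ a : A, χ (a ⊗ₜ[K] (1 : B)) = (1 : B) ⊗ₜ[K] a) ∧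
  (∀ (a a' : A) (b : B),
    χ ((a * a') ⊗ₜ[K] b) =
      lTensor B (mul' K A)
        (TensorProduct.assoc K B A A
          (rTensor A χ
            ((TensorProduct.assoc K A B A).symm (a ⊗ₜ[K] χ (a' ⊗ₜ[K] b)))))) ∧
  (∀ (a : A) (b b' : B),
    χ (a ⊗ₜ[K] (b * b')) =
      rTensor A (mul' K B)
        ((TensorProduct.assoc K B B A).symm
          (lTensor B χ
            (TensorProduct.assoc K B A B (χ (a ⊗ₜ[K] b) ⊗ₜ[K] b')))))

noncomputable def twistMul {A B : Type*} [Field K] [Ring A] [Ring B] [Algebra K A] [Algebra K B]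
    (χ : A ⊗[K] B →ₗ[K] B ⊗[K] A) :
    (B ⊗[K] A) ⊗[K] (B ⊗[K] A) →ₗ[K] B ⊗[K] A :=
  TensorProduct.map (mul' K B) (mul' K A)
    ∘ₗ (TensorProduct.assoc K B B (A ⊗[K] A)).symm.toLinearMap
    ∘ₗ lTensor B (TensorProduct.assoc K B A A).toLinearMap
    ∘ₗ lTensor B (rTensor A χ)
    ∘ₗ lTensor B (TensorProduct.assoc K A B A).symm.toLinearMap
    ∘ₗ (TensorProduct.assoc K B A (B ⊗[K] A)).toLinearMap

namespace TensorProduct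

variable {R M A : Type*} [CommSemiring R] [AddCommMonoid M] [Module R M] [Semiring A]
  [Algebra R A]

lemma lTensor_mul'_assoc_tmul (r : M ⊗[R] A) (z : A) :
    lTensor M (mul' R A) (TensorProduct.assoc R M A A (r ⊗ₜ z)) = map id (mulRight R z) r := by
  induction r using TensorProduct.induction_on with
  | zero => simp
  | tmul p q => simp [mul'_apply]
  | add r₁ r₂ h₁ h₂ => simp only [add_tmul, map_add, h₁, h₂]

lemma rTensor_mul'_assoc_symm_tmul (u : A) (r : A ⊗[R] M) :
    rTensor M (mul' R A) ((TensorProduct.assoc R A A M).symm (u ⊗ₜ r)) =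
      map (mulLeft R u) id r := by
  induction r using TensorProduct.induction_on with
  | zero => simp
  | tmul p q => simp [mul'_apply]
  | add r₁ r₂ h₁ h₂ => simp only [tmul_add, map_add, h₁, h₂]

variable {ι : Type*} [DecidableEq ι] (b : Module.Basis ι R M)

lemma equivFinsuppOfBasisLeft_map_id_mulRight (z : A) (t : M ⊗[R] A) (i : ι) :
    equivFinsuppOfBasisLeft b (map id (mulRight R z) t) i = equivFinsuppOfBasisLeft b t i * z := by
  induction t using TensorProduct.induction_on with
  | zero => simp
  | tmul m a => simp
  | add t₁ t₂ h₁ h₂ => simp only [map_add, Finsupp.add_apply, h₁, h₂, add_mul]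

lemma sum_basis_tmul_equivFinsuppOfBasisLeft [Fintype ι] (t : M ⊗[R] A) :
    ∑ i, b i ⊗ₜ equivFinsuppOfBasisLeft b t i = t := by
  conv_rhs => rw [← (equivFinsuppOfBasisLeft b).symm_apply_apply t]
  rw [equivFinsuppOfBasisLeft_symm_apply, Finsupp.sum_fintype _ _ (by simp)]

end TensorProduct

section TwistedTensorProduct

variable {K} {A B : Type*} [Field K] [Ring A] [Ring B] [Algebra K A] [Algebra K B]
  {χ : A ⊗[K] B →ₗ[K] B ⊗[K] A}

lemma twistMul_tmul_tmul (c : B) (a : A) (d : B) (a' : A) :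
    twistMul K χ ((c ⊗ₜ a) ⊗ₜ (d ⊗ₜ a')) = map (mulLeft K c) (mulRight K a') (χ (a ⊗ₜ d)) := by
  simp only [twistMul, coe_comp, Function.comp_apply, LinearEquiv.coe_coe, assoc_tmul,
    lTensor_tmul, assoc_symm_tmul, rTensor_tmul]
  generalize χ (a ⊗ₜ d) = t
  induction t using TensorProduct.induction_on with
  | zero => simp
  | tmul p q => simp [mul'_apply]
  | add t₁ t₂ h₁ h₂ => simp only [tmul_add, add_tmul, map_add, h₁, h₂]

lemma twistMul_tmul_left (u : B) (v : A) (s : B ⊗[K] A) :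
    twistMul K χ ((u ⊗ₜ v) ⊗ₜ s) =
      map (mulLeft K u) id (lTensor B (mul' K A) (TensorProduct.assoc K B A A
        (rTensor A χ ((TensorProduct.assoc K A B A).symm (v ⊗ₜ s))))) := by
  induction s using TensorProduct.induction_on with
  | zero => simp
  | tmul w z =>
    rw [twistMul_tmul_tmul, assoc_symm_tmul, rTensor_tmul, lTensor_mul'_assoc_tmul, map_map]
    simp
  | add s₁ s₂ h₁ h₂ => simp only [tmul_add, map_add, h₁, h₂]

lemma twistMul_tmul_right (t : B ⊗[K] A) (w : B) (z : A) :
    twistMul K χ (t ⊗ₜ (w ⊗ₜ z)) =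
      map id (mulRight K z) (rTensor A (mul' K B) ((TensorProduct.assoc K B B A).symm
        (lTensor B χ (TensorProduct.assoc K B A B (t ⊗ₜ w))))) := by
  induction t using TensorProduct.induction_on with
  | zero => simp
  | tmul u v =>
    rw [twistMul_tmul_tmul, assoc_tmul, lTensor_tmul, rTensor_mul'_assoc_symm_tmul, map_map]
    simp
  | add t₁ t₂ h₁ h₂ => simp only [add_tmul, map_add, h₁, h₂]

-- The two multiplicativity axioms of `χ` give the two halves of associativity.
lemma twistMul_map_tmul_tmul_one (htw : IsTwistingMap K χ) (c : B) (a : A) (d : B)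
    (t : B ⊗[K] A) :
    twistMul K χ (map (mulLeft K c) (mulRight K a) t ⊗ₜ (d ⊗ₜ 1)) =
      map (mulLeft K c) id (twistMul K χ (t ⊗ₜ χ (a ⊗ₜ d))) := by
  induction t using TensorProduct.induction_on with
  | zero => simp
  | tmul u v =>
    rw [map_tmul, twistMul_tmul_tmul, mulLeft_apply, mulRight_apply, htw.2.2.1 v a d,
      twistMul_tmul_left, map_map, mulLeft_mul, mulRight_one]
    rfl
  | add t₁ t₂ h₁ h₂ => simp only [map_add, add_tmul, h₁, h₂]

lemma twistMul_tmul_map_mulLeft (htw : IsTwistingMap K χ) (c : B) (a : A) (d : B)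
    (s : B ⊗[K] A) :
    twistMul K χ ((c ⊗ₜ a) ⊗ₜ map (mulLeft K d) id s) =
      map (mulLeft K c) id (twistMul K χ (χ (a ⊗ₜ d) ⊗ₜ s)) := by
  induction s using TensorProduct.induction_on with
  | zero => simp
  | tmul w z =>
    rw [map_tmul, twistMul_tmul_tmul, mulLeft_apply, id_apply, htw.2.2.2 a d w,
      twistMul_tmul_right, map_map]
    rfl
  | add s₁ s₂ h₁ h₂ => simp only [map_add, tmul_add, h₁, h₂]

lemma twistMul_assoc_tmul_one (htw : IsTwistingMap K χ) (x y : B ⊗[K] A) (d : B) :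
    twistMul K χ (twistMul K χ (x ⊗ₜ y) ⊗ₜ (d ⊗ₜ 1)) =
      twistMul K χ (x ⊗ₜ twistMul K χ (y ⊗ₜ (d ⊗ₜ 1))) := by
  induction x using TensorProduct.induction_on with
  | zero => simp
  | add x₁ x₂ h₁ h₂ => simp only [add_tmul, map_add, h₁, h₂]
  | tmul c a =>
    induction y using TensorProduct.induction_on with
    | zero => simp
    | add y₁ y₂ h₁ h₂ => simp only [add_tmul, tmul_add, map_add, h₁, h₂]
    | tmul c' a' =>
      rw [twistMul_tmul_tmul c a c' a', twistMul_map_tmul_tmul_one htw,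
        twistMul_tmul_tmul c' a' d 1, mulRight_one, twistMul_tmul_map_mulLeft htw]

lemma twistMul_tmul_tmul_eq_map_mulRight (x : B ⊗[K] A) (d : B) (a : A) :
    twistMul K χ (x ⊗ₜ (d ⊗ₜ a)) = map id (mulRight K a) (twistMul K χ (x ⊗ₜ (d ⊗ₜ 1))) := by
  induction x using TensorProduct.induction_on with
  | zero => simp
  | tmul c a' => rw [twistMul_tmul_tmul, twistMul_tmul_tmul, map_map, mulRight_one]; rfl
  | add x₁ x₂ h₁ h₂ => simp only [add_tmul, map_add, h₁, h₂]

lemma one_twistMul (htw : IsTwistingMap K χ) (y : B ⊗[K] A) :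
    twistMul K χ ((1 ⊗ₜ 1) ⊗ₜ y) = y := by
  induction y using TensorProduct.induction_on with
  | zero => simp
  | tmul d a => simp [twistMul_tmul_tmul, htw.1]
  | add y₁ y₂ h₁ h₂ => simp only [tmul_add, map_add, h₁, h₂]

lemma twistMul_one (htw : IsTwistingMap K χ) (x : B ⊗[K] A) :
    twistMul K χ (x ⊗ₜ (1 ⊗ₜ 1)) = x := by
  induction x using TensorProduct.induction_on with
  | zero => simp
  | tmul c a => simp [twistMul_tmul_tmul, htw.2.1]
  | add x₁ x₂ h₁ h₂ => simp only [add_tmul, map_add, h₁, h₂]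

end TwistedTensorProduct

section Representation

variable {K} {A B ι : Type*} [Field K] [Ring A] [Ring B] [Algebra K A] [Algebra K B]
  [DecidableEq ι] {χ : A ⊗[K] B →ₗ[K] B ⊗[K] A} (b : Module.Basis ι K B)

variable (χ) in
/-- Left multiplication by `x` on `B ⊗_χ A`, as a matrix in the right `A`-basis `b j ⊗ 1`. -/
noncomputable def twistRepr : B ⊗[K] A →ₗ[K] Matrix ι ι A where
  toFun x := Matrix.of fun i j => equivFinsuppOfBasisLeft b (twistMul K χ (x ⊗ₜ (b j ⊗ₜ 1))) i
  map_add' x y := by ext; simp [add_tmul]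
  map_smul' c x := by ext; simp [← smul_tmul']

lemma twistRepr_apply (x : B ⊗[K] A) (i j : ι) :
    twistRepr χ b x i j = equivFinsuppOfBasisLeft b (twistMul K χ (x ⊗ₜ (b j ⊗ₜ 1))) i :=
  rfl

lemma twistRepr_one_tmul [Fintype ι] (γ : ι → ι → A →ₗ[K] A)
    (hχ : ∀ (a : A) (i : ι), χ (a ⊗ₜ b i) = ∑ j, b j ⊗ₜ γ i j a) (a : A) :
    twistRepr χ b (1 ⊗ₜ a) = Matrix.of fun j i => γ i j a := by
  ext j i
  rw [twistRepr_apply, twistMul_tmul_tmul, mulLeft_one, mulRight_one, map_id, id_apply, hχ,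
    map_sum]
  simp [Finsupp.single_apply]

lemma twistRepr_tmul_one [Fintype ι] (htw : IsTwistingMap K χ) (lam : ι → ι → ι → K)
    (hlam : ∀ i j, b i * b j = ∑ k, lam i j k • b k) (k : ι) :
    twistRepr χ b (b k ⊗ₜ 1) = Matrix.of fun i j => algebraMap K A (lam k j i) := by
  ext i j
  rw [twistRepr_apply, twistMul_tmul_tmul, htw.1, map_tmul, mulLeft_apply, mulRight_apply,
    mul_one, hlam, sum_tmul, map_sum]
  simp [← smul_tmul', Finsupp.single_apply, Algebra.algebraMap_eq_smul_one]

lemma twistRepr_twistMul [Fintype ι] (htw : IsTwistingMap K χ) (x y : B ⊗[K] A) :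
    twistRepr χ b (twistMul K χ (x ⊗ₜ y)) = twistRepr χ b x * twistRepr χ b y := by
  ext i j
  rw [twistRepr_apply, twistMul_assoc_tmul_one htw, Matrix.mul_apply,
    ← sum_basis_tmul_equivFinsuppOfBasisLeft b (twistMul K χ (y ⊗ₜ (b j ⊗ₜ 1))), tmul_sum,
    map_sum, map_sum, Finsupp.finsetSum_apply]
  refine Finset.sum_congr rfl fun k _ => ?_
  rw [twistMul_tmul_tmul_eq_map_mulRight, equivFinsuppOfBasisLeft_map_id_mulRight]
  rfl

lemma twistRepr_one_tmul_one (htw : IsTwistingMap K χ) :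
    twistRepr χ b (1 ⊗ₜ 1) = 1 := by
  ext i j
  simp [twistRepr_apply, one_twistMul htw, Matrix.one_apply, Finsupp.single_apply, eq_comm]

lemma twistRepr_injective [Fintype ι] (htw : IsTwistingMap K χ) :
    Function.Injective (twistRepr χ b) := by
  refine (injective_iff_map_eq_zero _).mpr fun x hx => ?_
  have hcol (j : ι) : twistMul K χ (x ⊗ₜ (b j ⊗ₜ 1)) = 0 :=
    (equivFinsuppOfBasisLeft b).injective <| by
      ext i
      exact congr_fun₂ hx i j
  calc x = twistMul K χ (x ⊗ₜ (1 ⊗ₜ 1)) := (twistMul_one htw x).symm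
    _ = ∑ j, b.repr 1 j • twistMul K χ (x ⊗ₜ (b j ⊗ₜ 1)) := by
      conv_lhs => rw [← b.sum_repr 1]
      simp only [sum_tmul, ← smul_tmul', tmul_sum, tmul_smul, map_sum, map_smul]
    _ = 0 := by simp [hcol]

end Representation

theorem faithful_matrix_representation {A B : Type*} [Field K] [Ring A] [Ring B]
    [Algebra K A] [Algebra K B] {n : ℕ}
    (b : Module.Basis (Fin n) K B) (lam : Fin n → Fin n → Fin n → K)
    (hlam : ∀ i j : Fin n, b i * b j = ∑ k : Fin n, lam i j k • b k)
    (χ : A ⊗[K] B →ₗ[K] B ⊗[K] A) (γ : Fin n → Fin n → (A →ₗ[K] A))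
    (hχ : ∀ (a : A) (i : Fin n), χ (a ⊗ₜ[K] b i) = ∑ j : Fin n, b j ⊗ₜ[K] γ i j a)
    (htw : IsTwistingMap K χ) :
    ∃ Φ : B ⊗[K] A →ₗ[K] Matrix (Fin n) (Fin n) A,
      (∀ a : A, Φ ((1 : B) ⊗ₜ[K] a) = Matrix.of fun j i : Fin n => γ i j a) ∧
      (∀ k : Fin n,
        Φ (b k ⊗ₜ[K] (1 : A)) = Matrix.of fun i j : Fin n => algebraMap K A (lam k j i)) ∧
      (∀ x y : B ⊗[K] A, Φ (twistMul K χ (x ⊗ₜ[K] y)) = Φ x * Φ y) ∧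
      Φ ((1 : B) ⊗ₜ[K] (1 : A)) = 1 ∧
      Function.Injective Φ :=
  ⟨twistRepr χ b, twistRepr_one_tmul b γ hχ, twistRepr_tmul_one b htw lam hlam,
    twistRepr_twistMul b htw, twistRepr_one_tmul_one b htw, twistRepr_injective b htw⟩
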